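/- arXiv:2509.15936 — 2 statements merged into one kernel-verified Lean document; each statement's English description precedes it below -/
import Mathlib

section
/- Cauchy's argument principle: if f is holomorphic on a neighborhood of the closed disc of radius R about c and has no zeros on the boundary circle, then (1/(2πi)) ∮_{|z−c|=R} f′(z)/f(z) dz equals the number of zeros of f in the open disc counted with multiplicity. -/
/-!
Divide out the zeros: `f = P * g` with `P w = ∏_{z ∈ Z} (w - z) ^ m z` and `g` holomorphic and
zero-free on a neighbourhood of the closed disc. On the circle `f'/f = ∑ m z / (w - z) + g'/g`;
each `m z / (w - z)` integrates to `2πi m z`, and `g'/g`, holomorphic on the closed disc,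
integrates to `0` by Cauchy's theorem.
-/

open Complex Real

open Metric Filter Topology

section ProdSubPow

variable {𝕜 : Type*} [NontriviallyNormedField 𝕜] (Z : Finset 𝕜) (m : 𝕜 → ℕ)

def prodSubPow (w : 𝕜) : 𝕜 := ∏ z ∈ Z, (w - z) ^ m z

theorem differentiable_prodSubPow : Differentiable 𝕜 (prodSubPow Z m) := fun _ =>
  .fun_finsetProd fun z _ => (differentiableAt_id.sub_const z).pow _

variable {Z m}

theorem prodSubPow_ne_zero {w : 𝕜} (hw : w ∉ Z) : prodSubPow Z m w ≠ 0 :=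
  Finset.prod_ne_zero_iff.2 fun _ hz =>
    pow_ne_zero _ (sub_ne_zero.2 fun hwz => hw (hwz ▸ hz))

theorem prodSubPow_eq_pow_mul_erase [DecidableEq 𝕜] {z : 𝕜} (hz : z ∈ Z) (w : 𝕜) :
    prodSubPow Z m w = (w - z) ^ m z * prodSubPow (Z.erase z) m w :=
  (Finset.mul_prod_erase Z _ hz).symm

theorem logDeriv_prodSubPow {w : 𝕜} (hw : w ∉ Z) :
    logDeriv (prodSubPow Z m) w = ∑ z ∈ Z, (m z : 𝕜) / (w - z) := by
  have hne : ∀ z ∈ Z, (w - z) ^ m z ≠ 0 := fun z hz =>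
    pow_ne_zero _ (sub_ne_zero.2 fun hwz => hw (hwz ▸ hz))
  rw [show prodSubPow Z m = fun w => ∏ z ∈ Z, (w - z) ^ m z from rfl,
    logDeriv_prod hne fun z _ => (differentiableAt_id.sub_const z).pow _]
  refine Finset.sum_congr rfl fun z _ => ?_
  rw [logDeriv_fun_pow (differentiableAt_fun_id.sub_const z), logDeriv_apply]
  simp [div_eq_mul_inv]

end ProdSubPow

section Factorization

variable {𝕜 : Type*} [NontriviallyNormedField 𝕜] {Z : Finset 𝕜} {m : 𝕜 → ℕ}

theorem exists_differentiableOn_eq_prodSubPow_mul {f : 𝕜 → 𝕜} {U : Set 𝕜} (hU : IsOpen U)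
    (hf : DifferentiableOn 𝕜 f U)
    (hm : ∀ z ∈ Z, ∃ h : 𝕜 → 𝕜, AnalyticAt 𝕜 h z ∧ h z ≠ 0 ∧
      ∀ᶠ w in 𝓝 z, f w = (w - z) ^ m z * h w) :
    ∃ g : 𝕜 → 𝕜, DifferentiableOn 𝕜 g U ∧ (∀ z ∈ Z, g z ≠ 0) ∧
      ∀ w ∉ Z, f w = prodSubPow Z m w * g w := by
  classical
  choose! h hh_an hh_ne hh_eq using hm
  set g : 𝕜 → 𝕜 := fun w =>
    if w ∈ Z then h w w / prodSubPow (Z.erase w) m w else f w / prodSubPow Z m w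
  have hg_off : ∀ w ∉ Z, g w = f w / prodSubPow Z m w := fun w hw => if_neg hw
  have hg_near_zero : ∀ z ∈ Z, g =ᶠ[𝓝 z] fun w => h z w / prodSubPow (Z.erase z) m w := by
    intro z hz
    filter_upwards [hh_eq z hz, (Z.erase z).finite_toSet.isClosed.isOpen_compl.mem_nhds
      (by simp : z ∈ ((Z.erase z : Finset 𝕜) : Set 𝕜)ᶜ)] with w hfw hw
    by_cases hwz : w = z
    · subst hwz
      exact if_pos hz
    · have hwZ : w ∉ Z := fun hwZ => hw (Finset.mem_erase.2 ⟨hwz, hwZ⟩)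
      rw [hg_off w hwZ, hfw, prodSubPow_eq_pow_mul_erase hz,
        mul_div_mul_left _ _ (pow_ne_zero _ (sub_ne_zero.2 hwz))]
  have hg_near_nonzero : ∀ w ∉ Z, g =ᶠ[𝓝 w] fun v => f v / prodSubPow Z m v := fun w hw =>
    Z.finite_toSet.isClosed.isOpen_compl.eventually_mem hw |>.mono hg_off
  refine ⟨g, fun w hw => ?_, fun z hz => ?_, fun w hw => ?_⟩
  · refine DifferentiableAt.differentiableWithinAt ?_
    by_cases hwZ : w ∈ Z
    · exact ((hh_an w hwZ).differentiableAt.div (differentiable_prodSubPow _ m w)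
        (prodSubPow_ne_zero (Finset.notMem_erase w Z))).congr_of_eventuallyEq (hg_near_zero w hwZ)
    · exact ((hf.differentiableAt (hU.mem_nhds hw)).div (differentiable_prodSubPow Z m w)
        (prodSubPow_ne_zero hwZ)).congr_of_eventuallyEq (hg_near_nonzero w hwZ)
  · rw [(hg_near_zero z hz).eq_of_nhds]
    exact div_ne_zero (hh_ne z hz) (prodSubPow_ne_zero (Finset.notMem_erase z Z))
  · rw [hg_off w hw, mul_div_cancel₀ _ (prodSubPow_ne_zero hw)]

theorem logDeriv_eq_sum_div_sub_add_logDeriv {f g : 𝕜 → 𝕜}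
    (hfg : ∀ w ∉ Z, f w = prodSubPow Z m w * g w) {w : 𝕜} (hw : w ∉ Z) (hgw : g w ≠ 0)
    (hg : DifferentiableAt 𝕜 g w) :
    logDeriv f w = ∑ z ∈ Z, (m z : 𝕜) / (w - z) + logDeriv g w := by
  have hf : f =ᶠ[𝓝 w] fun v => prodSubPow Z m v * g v :=
    Z.finite_toSet.isClosed.isOpen_compl.eventually_mem hw |>.mono hfg
  rw [← logDeriv_prodSubPow hw, (logDeriv_congr_nhds hf).eq_of_nhds,
    logDeriv_mul w (prodSubPow_ne_zero hw) hgw (differentiable_prodSubPow Z m w) hg]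

end Factorization

theorem diffContOnCl_logDeriv_ball {g : ℂ → ℂ} {U : Set ℂ} {c : ℂ} {R : ℝ} (hU : IsOpen U)
    (hsub : closedBall c R ⊆ U) (hg : DifferentiableOn ℂ g U)
    (hg0 : ∀ w ∈ closedBall c R, g w ≠ 0) :
    DiffContOnCl ℂ (logDeriv g) (ball c R) := by
  set V := U ∩ g ⁻¹' {0}ᶜ
  have hV : IsOpen V := hg.continuousOn.isOpen_inter_preimage hU isOpen_compl_singleton
  have hgV : DifferentiableOn ℂ g V := hg.mono Set.inter_subset_left
  exact ((hgV.deriv hV).div hgV fun w hw => hw.2).diffContOnCl_ball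
    fun w hw => ⟨hsub hw, hg0 w hw⟩

theorem circleIntegrable_div_sub (a : ℂ) {z c : ℂ} {R : ℝ} (hz : z ∈ ball c R) :
    CircleIntegrable (fun w => a / (w - z)) c R := by
  simp_rw [div_eq_mul_inv]
  refine (circleIntegrable_sub_inv_iff.2 (.inr ?_)).const_smul (a := a)
  rw [abs_of_pos (pos_of_mem_ball hz)]
  exact fun hs => (mem_sphere.1 hs ▸ mem_ball.1 hz).false

theorem circleIntegral_sum_div_sub {Z : Finset ℂ} (a : ℂ → ℂ) {c : ℂ} {R : ℝ}
    (hZ : ∀ z ∈ Z, z ∈ ball c R) :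
    (∮ w in C(c, R), ∑ z ∈ Z, a z / (w - z)) = 2 * π * I * ∑ z ∈ Z, a z := by
  rw [circleIntegral.integral_fun_sum fun z hz => circleIntegrable_div_sub (a z) (hZ z hz),
    Finset.mul_sum]
  refine Finset.sum_congr rfl fun z hz => ?_
  simp_rw [div_eq_mul_inv]
  rw [circleIntegral.integral_const_mul, circleIntegral.integral_sub_inv_of_mem_ball (hZ z hz),
    mul_comm]

/-- Cauchy's argument principle on a circle: if `f` is holomorphic on an open set containing
the closed disc of radius `R` about `c` and has no zeros on the boundary circle, then
`(1/(2πi)) ∮_{|z-c|=R} f'(z)/f(z) dz` equals the number of zeros of `f` in the open disc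
counted with multiplicity (here `Z` is the finite set of zeros in the open disc and `m z`
the multiplicity of each zero `z`). -/
theorem argument_principle_circle
    (f : ℂ → ℂ) (c : ℂ) (R : ℝ) (hR : 0 < R)
    (U : Set ℂ) (hU : IsOpen U) (hsub : Metric.closedBall c R ⊆ U)
    (hf : DifferentiableOn ℂ f U)
    (hbd : ∀ z ∈ Metric.sphere c R, f z ≠ 0)
    (Z : Finset ℂ) (hZ : ∀ z, z ∈ Z ↔ z ∈ Metric.ball c R ∧ f z = 0)
    (m : ℂ → ℕ)
    (hm : ∀ z ∈ Z, ∃ h : ℂ → ℂ, AnalyticAt ℂ h z ∧ h z ≠ 0 ∧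
      ∀ᶠ w in nhds z, f w = (w - z) ^ m z * h w) :
    (2 * π * Complex.I)⁻¹ * (∮ z in C(c, R), deriv f z / f z) = ∑ z ∈ Z, (m z : ℂ) := by
  obtain ⟨g, hg, hgZ, hfg⟩ := exists_differentiableOn_eq_prodSubPow_mul hU hf hm
  have hZ_ball : ∀ z ∈ Z, z ∈ ball c R := fun z hz => ((hZ z).1 hz).1
  have hg0 : ∀ w ∈ closedBall c R, g w ≠ 0 := by
    intro w hw
    by_cases hwZ : w ∈ Z
    · exact hgZ w hwZ
    have hfw : f w ≠ 0 := by
      rcases (mem_closedBall.1 hw).lt_or_eq with hlt | heq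
      · exact fun h0 => hwZ ((hZ w).2 ⟨mem_ball.2 hlt, h0⟩)
      · exact hbd w (mem_sphere.2 heq)
    exact right_ne_zero_of_mul (hfg w hwZ ▸ hfw)
  have hlog : Set.EqOn (fun w => deriv f w / f w)
      (fun w => ∑ z ∈ Z, (m z : ℂ) / (w - z) + logDeriv g w) (sphere c R) := fun w hw =>
    have hwZ : w ∉ Z := fun hwZ => (mem_sphere.1 hw ▸ mem_ball.1 (hZ_ball w hwZ)).false
    logDeriv_eq_sum_div_sub_add_logDeriv hfg hwZ (hg0 w (sphere_subset_closedBall hw))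
      (hg.differentiableAt (hU.mem_nhds (hsub (sphere_subset_closedBall hw))))
  have hcl := diffContOnCl_logDeriv_ball hU hsub hg hg0
  have hsum_int : CircleIntegrable (fun w => ∑ z ∈ Z, (m z : ℂ) / (w - z)) c R :=
    .fun_sum Z fun z hz => circleIntegrable_div_sub _ (hZ_ball z hz)
  rw [circleIntegral.integral_congr hR.le hlog, circleIntegral.integral_add hsum_int
    (hcl.continuousOn_ball.mono sphere_subset_closedBall |>.circleIntegrable hR.le),
    circleIntegral_sum_div_sub _ hZ_ball, hcl.circleIntegral_eq_zero hR.le, add_zero,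
    inv_mul_cancel_left₀ two_pi_I_ne_zero]
end

section
/- Exactness of the trapezium rule discretization of Cauchy's integral formula for polynomials: if f is a polynomial of degree at most m−1 and m ≥ 2, then f′(z) = (1/(mr)) ∑_{j=0}^{m−1} e^{−2πij/m} f(z + r e^{2πij/m}) for any r > 0. -/
open Complex Real Polynomial

/-- Exactness of the trapezium rule discretization of Cauchy's integral formula for
polynomials: if `p` is a polynomial of degree at most `m - 1` with `m ≥ 2`, then for any
`r > 0` and `z ∈ ℂ`,
`p'(z) = (1/(m r)) ∑_{j=0}^{m-1} e^{-2πij/m} p(z + r e^{2πij/m})`. -/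
theorem trapezium_rule_exact_for_polynomials
    (m : ℕ) (hm : 2 ≤ m) (p : Polynomial ℂ) (hdeg : p.natDegree ≤ m - 1)
    (z : ℂ) (r : ℝ) (hr : 0 < r) :
    (p.derivative).eval z = ((m : ℂ) * (r : ℂ))⁻¹ *
      ∑ j ∈ Finset.range m,
        Complex.exp (-(2 * (π : ℂ) * Complex.I * (j : ℂ) / (m : ℂ))) *
          p.eval (z + (r : ℂ) * Complex.exp (2 * (π : ℂ) * Complex.I * (j : ℂ) / (m : ℂ))) := by
  have hm0 : m ≠ 0 := by omega
  set ζ : ℂ := Complex.exp (2 * (π : ℂ) * Complex.I / m) with hζdef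
  have hζ : IsPrimitiveRoot ζ m := Complex.isPrimitiveRoot_exp m hm0
  have hζ0 : ζ ≠ 0 := Complex.exp_ne_zero _
  have hζm : ζ ^ m = 1 := hζ.pow_eq_one
  have hexp : ∀ j : ℕ, Complex.exp (2 * (π : ℂ) * Complex.I * (j : ℂ) / (m : ℂ)) = ζ ^ j := by
    intro j
    rw [hζdef, ← Complex.exp_nat_mul]
    ring_nf
  have hexpneg : ∀ j : ℕ,
      Complex.exp (-(2 * (π : ℂ) * Complex.I * (j : ℂ) / (m : ℂ))) = (ζ⁻¹) ^ j := by
    intro j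
    rw [Complex.exp_neg, hexp, inv_pow]
  have hdeg' : (taylor z p).natDegree < m := by
    rw [natDegree_taylor]; omega
  have heval : ∀ w : ℂ, p.eval (z + w) =
      ∑ k ∈ Finset.range m, (taylor z p).coeff k * w ^ k := by
    intro w
    rw [add_comm, ← taylor_eval]
    exact eval_eq_sum_range' hdeg' w
  have key : (∑ j ∈ Finset.range m, (ζ⁻¹) ^ j * p.eval (z + (r : ℂ) * ζ ^ j))
      = (m : ℂ) * ((r : ℂ) * (p.derivative.eval z)) := by
    have step1 : ∀ j ∈ Finset.range m, (ζ⁻¹) ^ j * p.eval (z + (r : ℂ) * ζ ^ j)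
        = ∑ k ∈ Finset.range m,
            (taylor z p).coeff k * (r : ℂ) ^ k * (ζ⁻¹ * ζ ^ k) ^ j := by
      intro j _
      rw [heval, Finset.mul_sum]
      refine Finset.sum_congr rfl fun k _ => ?_
      rw [mul_pow, mul_pow, ← pow_mul, ← pow_mul, mul_comm k j]
      ring
    rw [Finset.sum_congr rfl step1, Finset.sum_comm]
    have hsum : ∀ k ∈ Finset.range m,
        (∑ j ∈ Finset.range m, (taylor z p).coeff k * (r : ℂ) ^ k * (ζ⁻¹ * ζ ^ k) ^ j)
        = if k = 1 then (taylor z p).coeff k * (r : ℂ) ^ k * m else 0 := by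
      intro k hk
      rw [← Finset.mul_sum]
      rcases eq_or_ne k 1 with rfl | hk1
      · have h1 : ζ⁻¹ * ζ ^ 1 = 1 := by
          rw [pow_one, inv_mul_cancel₀ hζ0]
        rw [h1]
        simp
      · have hne : ζ⁻¹ * ζ ^ k ≠ 1 := by
          intro h
          apply hk1
          have hζk : ζ ^ k = ζ := by
            field_simp at h
            simpa using h
          exact hζ.pow_inj (Finset.mem_range.mp hk) (by omega) (by simpa using hζk)
        have hpow : (ζ⁻¹ * ζ ^ k) ^ m = 1 := by
          rw [mul_pow, ← pow_mul, mul_comm k m, pow_mul, hζm, inv_pow, hζm, one_pow]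
          simp
        rw [geom_sum_eq hne, hpow]
        simp [hk1]
    rw [Finset.sum_congr rfl hsum, Finset.sum_ite_eq' (Finset.range m) 1
      (fun k => (taylor z p).coeff k * (r : ℂ) ^ k * m)]
    have h1m : (1 : ℕ) ∈ Finset.range m := Finset.mem_range.mpr (by omega)
    rw [if_pos h1m, taylor_coeff_one]
    ring
  have hconv : (∑ j ∈ Finset.range m,
      Complex.exp (-(2 * (π : ℂ) * Complex.I * (j : ℂ) / (m : ℂ))) *
        p.eval (z + (r : ℂ) * Complex.exp (2 * (π : ℂ) * Complex.I * (j : ℂ) / (m : ℂ))))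
      = ∑ j ∈ Finset.range m, (ζ⁻¹) ^ j * p.eval (z + (r : ℂ) * ζ ^ j) := by
    refine Finset.sum_congr rfl fun j _ => ?_
    rw [hexp, hexpneg]
  rw [hconv, key]
  have hmne : (m : ℂ) ≠ 0 := Nat.cast_ne_zero.mpr hm0
  have hrne : (r : ℂ) ≠ 0 := by
    simp [Complex.ofReal_ne_zero, hr.ne']
  field_simp
end
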